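/- (Proposition 1, vanishing weight ratio in the infinite-time limit) If u(0) > 0 and 0 < v_j(0) < (1/2)·log(p/(1-p)) for every j, then for every j the weight ratio α_j(t) = v_j(t)/u(t) is positive for all t ≥ 0 and converges to 0 as t → ∞. -/

import Mathlib

/-!
Along the flow `h(v_j) e^u` is conserved, because `h' = -g`. Hence `h(v_j)` keeps the sign it
has at time `0`, which is positive exactly when `v_j < ½ log (p / (1 - p))`; so every `v_j` stays
below that bound, and `u` and the `v_j` increase. Moreover `(e^u)' = ∏ g(v_i) ≥ (1 - p)^D` once
the `v_i` are nonnegative, so `e^u` grows at least linearly and `u → ∞`. The ratio `v_j / u`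
is therefore squeezed between `0` and `½ log (p / (1 - p)) / u`.
-/

open Real Set Filter

theorem monotoneOn_Ici_of_hasDerivWithinAt_nonneg {f f' : ℝ → ℝ} {a : ℝ}
    (hf : ∀ t ∈ Ici a, HasDerivWithinAt f (f' t) (Ici a) t)
    (hf' : ∀ t ∈ Ioi a, 0 ≤ f' t) : MonotoneOn f (Ici a) := by
  refine monotoneOn_of_hasDerivWithinAt_nonneg (f' := f') (convex_Ici a)
    (fun t ht => (hf t ht).continuousWithinAt) (fun t ht => ?_) (fun t ht => ?_)
  · rw [interior_Ici] at ht ⊢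
    exact (hf t (mem_Ici_of_Ioi ht)).mono Ioi_subset_Ici_self
  · rw [interior_Ici] at ht
    exact hf' t ht

theorem eq_of_hasDerivWithinAt_Ici_zero {f : ℝ → ℝ} {a : ℝ}
    (hf : ∀ t ∈ Ici a, HasDerivWithinAt f 0 (Ici a) t) : ∀ t ∈ Ici a, f t = f a :=
  fun t ht => constant_of_has_deriv_right_zero
    (fun s hs => (hf s hs.1).continuousWithinAt.mono Icc_subset_Ici_self)
    (fun s hs => (hf s hs.1).mono (Ici_subset_Ici.2 hs.1)) t ⟨ht, le_rfl⟩

theorem tendsto_atTop_of_hasDerivWithinAt_Ici_ge {f f' : ℝ → ℝ} {a c : ℝ} (hc : 0 < c)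
    (hf : ∀ t ∈ Ici a, HasDerivWithinAt f (f' t) (Ici a) t)
    (hf' : ∀ t ∈ Ioi a, c ≤ f' t) : Tendsto f atTop atTop := by
  have hmono : MonotoneOn (fun t => f t - c * t) (Ici a) :=
    monotoneOn_Ici_of_hasDerivWithinAt_nonneg (f' := fun t => f' t - c)
      (fun t ht => ((hf t ht).sub ((hasDerivAt_id t).const_mul c).hasDerivWithinAt).congr_deriv
        (by rw [mul_one]))
      (fun t ht => sub_nonneg.2 (hf' t ht))
  have hlower : ∀ᶠ t in atTop, f a + c * (t - a) ≤ f t := by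
    filter_upwards [eventually_ge_atTop a] with t ht
    have : f a - c * a ≤ f t - c * t := hmono self_mem_Ici ht ht
    linarith
  refine tendsto_atTop_mono' atTop hlower (tendsto_atTop_add_const_left _ _ ?_)
  exact (tendsto_atTop_add_const_right _ (-a) tendsto_id).const_mul_atTop hc

namespace WeightFlow

variable {p x : ℝ}

noncomputable def g (p x : ℝ) : ℝ := p * exp (-x) + (1 - p) * exp x

noncomputable def h (p x : ℝ) : ℝ := p * exp (-x) - (1 - p) * exp x

theorem hasDerivAt_h (p x : ℝ) : HasDerivAt (h p) (-g p x) x := by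
  refine (((hasDerivAt_neg x).exp.const_mul p).sub
    ((hasDerivAt_exp x).const_mul (1 - p))).congr_deriv ?_
  simp only [g]
  ring

theorem g_nonneg (hp0 : 0 ≤ p) (hp1 : p ≤ 1) (x : ℝ) : 0 ≤ g p x := by
  have : 0 ≤ 1 - p := sub_nonneg.2 hp1
  unfold g
  positivity

theorem one_sub_le_g (hp0 : 0 ≤ p) (hp1 : p ≤ 1) (hx : 0 ≤ x) : 1 - p ≤ g p x := by
  unfold g
  nlinarith [one_le_exp hx, mul_nonneg hp0 (exp_pos (-x)).le]

theorem h_pos_iff (hp0 : 0 < p) (hp1 : p < 1) : 0 < h p x ↔ x < 1 / 2 * log (p / (1 - p)) := by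
  have h1p : 0 < 1 - p := sub_pos.2 hp1
  have hexp : exp (-x) * exp x = 1 := by rw [← exp_add, neg_add_cancel, exp_zero]
  calc 0 < h p x ↔ (1 - p) * exp x * exp x < p * exp (-x) * exp x := by
        rw [h, sub_pos, mul_lt_mul_iff_left₀ (exp_pos x)]
    _ ↔ exp (2 * x) < p / (1 - p) := by
        rw [mul_assoc p, hexp, mul_one, lt_div_iff₀ h1p, two_mul, exp_add, mul_assoc, mul_comm]
    _ ↔ x < 1 / 2 * log (p / (1 - p)) := by
        rw [← lt_log_iff_exp_lt (div_pos hp0 h1p)]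
        constructor <;> intro <;> linarith

structure IsSolution {ι : Type*} [Fintype ι] [DecidableEq ι]
    (p : ℝ) (u : ℝ → ℝ) (v : ι → ℝ → ℝ) : Prop where
  hasDerivWithinAt_u : ∀ t ∈ Ici (0 : ℝ),
    HasDerivWithinAt u (exp (-u t) * ∏ i, g p (v i t)) (Ici 0) t
  hasDerivWithinAt_v : ∀ j, ∀ t ∈ Ici (0 : ℝ),
    HasDerivWithinAt (v j)
      (exp (-u t) * h p (v j t) * ∏ i ∈ Finset.univ.erase j, g p (v i t)) (Ici 0) t

namespace IsSolution

variable {ι : Type*} [Fintype ι] [DecidableEq ι] {u : ℝ → ℝ} {v : ι → ℝ → ℝ}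

theorem hasDerivWithinAt_h_mul_exp (hf : IsSolution p u v) (j : ι) {t : ℝ} (ht : t ∈ Ici 0) :
    HasDerivWithinAt (fun s => h p (v j s) * exp (u s)) 0 (Ici 0) t := by
  refine (((hasDerivAt_h p (v j t)).comp_hasDerivWithinAt t (hf.hasDerivWithinAt_v j t ht)).mul
    (hf.hasDerivWithinAt_u t ht).exp).congr_deriv ?_
  rw [← Finset.mul_prod_erase Finset.univ (fun i => g p (v i t)) (Finset.mem_univ j),
    Function.comp_apply]
  ring

theorem h_mul_exp_eq (hf : IsSolution p u v) (j : ι) :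
    ∀ t ∈ Ici 0, h p (v j t) * exp (u t) = h p (v j 0) * exp (u 0) :=
  eq_of_hasDerivWithinAt_Ici_zero fun _ ht => hf.hasDerivWithinAt_h_mul_exp j ht

theorem h_pos (hf : IsSolution p u v) {j : ι} (hj : 0 < h p (v j 0)) :
    ∀ t ∈ Ici 0, 0 < h p (v j t) := fun t ht =>
  pos_of_mul_pos_left (by rw [hf.h_mul_exp_eq j t ht]; positivity) (exp_pos (u t)).le

theorem monotoneOn_u (hf : IsSolution p u v) (hp0 : 0 ≤ p) (hp1 : p ≤ 1) :
    MonotoneOn u (Ici 0) :=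
  monotoneOn_Ici_of_hasDerivWithinAt_nonneg hf.hasDerivWithinAt_u fun _ _ =>
    mul_nonneg (exp_pos _).le (Finset.prod_nonneg fun _ _ => g_nonneg hp0 hp1 _)

theorem monotoneOn_v (hf : IsSolution p u v) (hp0 : 0 ≤ p) (hp1 : p ≤ 1) {j : ι}
    (hj : 0 < h p (v j 0)) : MonotoneOn (v j) (Ici 0) :=
  monotoneOn_Ici_of_hasDerivWithinAt_nonneg (hf.hasDerivWithinAt_v j) fun t ht =>
    mul_nonneg (mul_nonneg (exp_pos _).le (hf.h_pos hj t (mem_Ici_of_Ioi ht)).le)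
      (Finset.prod_nonneg fun _ _ => g_nonneg hp0 hp1 _)

theorem tendsto_u_atTop (hf : IsSolution p u v) (hp0 : 0 ≤ p) (hp1 : p < 1)
    (hv : ∀ i, ∀ t ∈ Ici 0, 0 ≤ v i t) : Tendsto u atTop atTop := by
  have hexp_u : ∀ t ∈ Ici (0 : ℝ),
      HasDerivWithinAt (fun s => exp (u s)) (∏ i, g p (v i t)) (Ici 0) t := fun t ht =>
    (hf.hasDerivWithinAt_u t ht).exp.congr_deriv
      (by rw [← mul_assoc, ← exp_add, add_neg_cancel, exp_zero, one_mul])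
  have hprod : ∀ t ∈ Ioi (0 : ℝ), (1 - p) ^ Fintype.card ι ≤ ∏ i, g p (v i t) := by
    intro t ht
    rw [← Finset.card_univ, ← Finset.prod_const]
    exact Finset.prod_le_prod (fun _ _ => (sub_pos.2 hp1).le)
      fun i _ => one_sub_le_g hp0 hp1.le (hv i t (mem_Ici_of_Ioi ht))
  have hgrowth :=
    tendsto_atTop_of_hasDerivWithinAt_Ici_ge (pow_pos (sub_pos.2 hp1) _) hexp_u hprod
  exact (tendsto_log_atTop.comp hgrowth).congr fun t => log_exp (u t)

end IsSolution

end WeightFlow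

open WeightFlow in
theorem stmt_15_general
    (D : ℕ) (p : ℝ) (hp : 1 / 2 < p) (hp1 : p < 1)
    (u : ℝ → ℝ) (v : Fin D → ℝ → ℝ)
    -- gradient-flow system on `[0, ∞)`
    (hu : ∀ t ∈ Set.Ici (0 : ℝ),
      HasDerivWithinAt u
        (Real.exp (-u t) * ∏ i, (p * Real.exp (-v i t) + (1 - p) * Real.exp (v i t)))
        (Set.Ici 0) t)
    (hv : ∀ (j : Fin D), ∀ t ∈ Set.Ici (0 : ℝ),
      HasDerivWithinAt (v j)
        (Real.exp (-u t) * (p * Real.exp (-v j t) - (1 - p) * Real.exp (v j t)) *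
          ∏ i ∈ Finset.univ.erase j,
            (p * Real.exp (-v i t) + (1 - p) * Real.exp (v i t)))
        (Set.Ici 0) t)
    (hu0 : 0 < u 0)
    (hv0 : ∀ j, 0 < v j 0 ∧ v j 0 < (1 / 2) * Real.log (p / (1 - p))) :
    ∀ j, (∀ t ∈ Set.Ici (0 : ℝ), 0 < v j t / u t) ∧
      Filter.Tendsto (fun t => v j t / u t) Filter.atTop (nhds 0) := by
  have hf : IsSolution p u v := ⟨hu, hv⟩
  have hp0 : 0 < p := by linarith
  have hh0 : ∀ j, 0 < h p (v j 0) := fun j => (h_pos_iff hp0 hp1).2 (hv0 j).2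
  have hu_pos : ∀ t ∈ Ici (0 : ℝ), 0 < u t := fun t ht =>
    hu0.trans_le (hf.monotoneOn_u hp0.le hp1.le self_mem_Ici ht ht)
  have hv_pos : ∀ j, ∀ t ∈ Ici (0 : ℝ), 0 < v j t := fun j t ht =>
    (hv0 j).1.trans_le (hf.monotoneOn_v hp0.le hp1.le (hh0 j) self_mem_Ici ht ht)
  have hv_lt : ∀ j, ∀ t ∈ Ici (0 : ℝ), v j t < 1 / 2 * log (p / (1 - p)) := fun j t ht =>
    (h_pos_iff hp0 hp1).1 (hf.h_pos (hh0 j) t ht)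
  have hu_top := hf.tendsto_u_atTop hp0.le hp1 fun i t ht => (hv_pos i t ht).le
  intro j
  refine ⟨fun t ht => div_pos (hv_pos j t ht) (hu_pos t ht), ?_⟩
  refine tendsto_of_tendsto_of_tendsto_of_le_of_le'
    (h := fun t => 1 / 2 * log (p / (1 - p)) / u t)
    tendsto_const_nhds (tendsto_const_nhds.div_atTop hu_top) ?_ ?_
  · filter_upwards [eventually_ge_atTop 0] with t ht
    exact (div_pos (hv_pos j t ht) (hu_pos t ht)).le
  · filter_upwards [eventually_ge_atTop 0] with t ht
    exact div_le_div_of_nonneg_right (hv_lt j t ht).le (hu_pos t ht).le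

/-- **Proposition 1, vanishing weight ratio in the infinite-time limit.** -/
theorem stmt_15
    (D : ℕ) (hD : 0 < D) (p : ℝ) (hp : 1 / 2 < p) (hp1 : p < 1)
    (u : ℝ → ℝ) (v : Fin D → ℝ → ℝ)
    -- gradient-flow system on `[0, ∞)`
    (hu : ∀ t ∈ Set.Ici (0 : ℝ),
      HasDerivWithinAt u
        (Real.exp (-u t) * ∏ i, (p * Real.exp (-v i t) + (1 - p) * Real.exp (v i t)))
        (Set.Ici 0) t)
    (hv : ∀ (j : Fin D), ∀ t ∈ Set.Ici (0 : ℝ),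
      HasDerivWithinAt (v j)
        (Real.exp (-u t) * (p * Real.exp (-v j t) - (1 - p) * Real.exp (v j t)) *
          ∏ i ∈ Finset.univ.erase j,
            (p * Real.exp (-v i t) + (1 - p) * Real.exp (v i t)))
        (Set.Ici 0) t)
    (hu0 : 0 < u 0)
    (hv0 : ∀ j, 0 < v j 0 ∧ v j 0 < (1 / 2) * Real.log (p / (1 - p))) :
    ∀ j, (∀ t ∈ Set.Ici (0 : ℝ), 0 < v j t / u t) ∧
      Filter.Tendsto (fun t => v j t / u t) Filter.atTop (nhds 0) :=
  stmt_15_general D p hp hp1 u v hu hv hu0 hv0
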